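/- Let W_J be a standard parabolic subgroup of a Coxeter group W (J ⊆ I), let c be a Coxeter element of W, and let c' be a Coxeter element of W_J such that some reduced word for c contains a reduced word for c' as a subword. If c is futuristic, then c' is futuristic. In particular, every standard parabolic subgroup of a futuristic Coxeter group is futuristic. -/

import Mathlib

open scoped Classical

noncomputable section

namespace BKBilliards

variable {I : Type*} [Fintype I] [DecidableEq I]
variable {M : CoxeterMatrix I} {W : Type*} [Group W]

/-- The simple root indexed by `i`, i.e. the `i`-th standard basis vector of `ℝ^I`. -/
def sroot (i : I) : I → ℝ := Pi.single i 1

/-- The data `(ρ, B)` constitutes the standard geometric representation of the Coxeter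
system `cs`, together with its induced symmetric bilinear form (with `μ = 1` on all
pairs whose Coxeter matrix entry is `∞`, encoded as `0`). -/
structure IsGeometric (cs : CoxeterSystem M W) (ρ : Representation ℝ W (I → ℝ))
    (B : LinearMap.BilinForm ℝ (I → ℝ)) : Prop where
  /-- `B(αᵢ, αᵢ') = -cos (π / m i i')` when `m i i' ≠ ∞`. -/
  form_apply_of_ne_zero : ∀ i i' : I, M i i' ≠ 0 →
    B (sroot i) (sroot i') = - Real.cos (Real.pi / (M i i' : ℝ))
  /-- `B(αᵢ, αᵢ') = -1` when `m i i' = ∞` (encoded as `0`). -/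
  form_apply_of_eq_zero : ∀ i i' : I, M i i' = 0 → B (sroot i) (sroot i') = -1
  /-- Each simple reflection acts by the reflection formula. -/
  simple_apply : ∀ (i : I) (v : I → ℝ), ρ (cs.simple i) v = v - (2 * B v (sroot i)) • sroot i

variable (ρ : Representation ℝ W (I → ℝ))

/-- The root system `Φ = {w αᵢ : w ∈ W, i ∈ I}`. -/
def Phi : Set (I → ℝ) := {v | ∃ (w : W) (i : I), v = ρ w (sroot i)}

/-- The half-space `H_β⁺ = {w ∈ W : w β ∈ Φ⁺}`: for a root `β`, membership amounts to
`w β` being a nonnegative combination of the simple roots. -/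
def Hplus (β : I → ℝ) : Set W := {w : W | 0 ≤ ρ w β}

/-- `R(𝓛) = {β ∈ Φ : 𝓛 ⊆ H_β⁺}`. -/
def RL (L : Set W) : Set (I → ℝ) := {β | β ∈ Phi ρ ∧ ∀ w ∈ L, w ∈ Hplus ρ β}

/-- `𝓛` is convex if it equals the intersection of all half-spaces containing it. -/
def IsConvex (L : Set W) : Prop := ∀ u : W, (∀ β ∈ RL ρ L, u ∈ Hplus ρ β) → u ∈ L

/-- The set of separators of `u`: `Sep(u) = {β ∈ R(𝓛) : u β ∈ Φ⁻}`. -/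
def Sep (L : Set W) (u : W) : Set (I → ℝ) := {β | β ∈ RL ρ L ∧ ρ u β ≤ 0}

variable (cs : CoxeterSystem M W)

/-- The noninvertible Bender–Knuth toggle `τᵢ` associated to the convex set `𝓛`. -/
def toggle (L : Set W) (i : I) (u : W) : W :=
  if ρ u⁻¹ (sroot i) ∈ RL ρ L then u else cs.simple i * u

/-- For a word `𝗐 = i_M ⋯ i_1` (a list whose head is `i_M`), the composition
`τ_𝗐 = τ_{i_M} ⋯ τ_{i_1}`. -/
def toggleWord (L : Set W) (l : List I) (u : W) : W :=
  l.foldr (fun i v => toggle ρ cs L i v) u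

/-- `β` dominates `β'` if `H_β⁺ ⊇ H_{β'}⁺`. -/
def Dominates (β β' : I → ℝ) : Prop := Hplus ρ β' ⊆ Hplus ρ β

/-- A small root: a positive root dominating no positive root other than itself. -/
def IsSmall (β : I → ℝ) : Prop :=
  β ∈ Phi ρ ∧ 0 ≤ β ∧ ∀ β', β' ∈ Phi ρ → 0 ≤ β' → Dominates ρ β β' → β' = β

/-- `β` is a transmitting root of the stratum `Str(R)`:
`β ∈ R(𝓛)` and `β = -w⁻¹ αᵢ` for some `w` with `Sep(w) = R` and some `i ∈ I`. -/
def IsTransmitting (L : Set W) (R : Set (I → ℝ)) (β : I → ℝ) : Prop :=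
  β ∈ RL ρ L ∧ ∃ (w : W) (i : I), Sep ρ L w = R ∧ β = - ρ w⁻¹ (sroot i)

end BKBilliards

open BKBilliards

namespace BKBilliards

/-- A Coxeter element `c` is futuristic if for every reduced word `i_n ⋯ i_1` for `c` in
which every index of `I` occurs exactly once, every nonempty convex set `𝓛 ⊆ W` is heavy
with respect to `c`: every periodic point of `Pro_c = τ_{i_n} ⋯ τ_{i_1}` lies in `𝓛`. -/
def Futuristic {I : Type*} [Fintype I] [DecidableEq I] {M : CoxeterMatrix I}
    {W : Type*} [Group W] (cs : CoxeterSystem M W) (ρ : Representation ℝ W (I → ℝ))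
    (c : W) : Prop :=
  ∀ l : List I, l.Nodup → (∀ i, i ∈ l) → cs.wordProd l = c →
    ∀ L : Set W, L.Nonempty → IsConvex ρ L →
      ∀ u : W, (∃ K : ℕ, 1 ≤ K ∧ (toggleWord ρ cs L l)^[K] u = u) → u ∈ L

/-- The restriction of a Coxeter matrix to a subset `J` of the index set. -/
def restrictMatrix {I : Type*} (M : CoxeterMatrix I) (J : Finset I) :
    CoxeterMatrix {i // i ∈ J} where
  M := fun j j' => M j j'
  isSymm := by
    ext j j'
    exact M.isSymm.apply j j'
  diagonal := fun j => M.diagonal j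
  off_diagonal := fun j j' h => M.off_diagonal j j' (fun hc => h (Subtype.ext hc))

end BKBilliards
namespace BKBilliards

open CoxeterSystem List

set_option linter.unusedSectionVars false

variable {I : Type*} [Fintype I] [DecidableEq I]
variable {M : CoxeterMatrix I} {W : Type*} [Group W]
variable {cs : CoxeterSystem M W} {ρ : Representation ℝ W (I → ℝ)}
variable {B : LinearMap.BilinForm ℝ (I → ℝ)}

local prefix:100 "s" => cs.simple
local prefix:100 "π" => cs.wordProd
local prefix:100 "ℓ" => cs.length

@[simp] lemma sroot_apply_self (i : I) : sroot i i = 1 := Pi.single_eq_same i 1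

lemma sroot_apply_ne {i k : I} (h : k ≠ i) : sroot (I := I) i k = 0 :=
  Pi.single_eq_of_ne h 1

lemma sroot_nonneg (i : I) : 0 ≤ sroot (I := I) i := by
  intro k
  by_cases h : k = i
  · subst h; simp [sroot]
  · simp [sroot_apply_ne h]

lemma sroot_ne_zero (i : I) : sroot (I := I) i ≠ 0 := by
  intro h
  have := congrFun h i
  simp at this

section geom

variable (hg : IsGeometric cs ρ B)
include hg

lemma bform_diag (i : I) : B (sroot i) (sroot i) = 1 := by
  have h1 : M i i = 1 := M.diagonal i
  have := hg.form_apply_of_ne_zero i i (by rw [h1]; norm_num)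
  rw [h1] at this
  simp [this, Real.cos_pi]

omit hg in
lemma two_le_M {i j : I} (hij : i ≠ j) (h0 : M i j ≠ 0) : 2 ≤ M i j := by
  have h1 : M i j ≠ 1 := M.off_diagonal i j hij
  omega

lemma bform_symm (i j : I) : B (sroot i) (sroot j) = B (sroot j) (sroot i) := by
  by_cases h0 : M i j = 0
  · rw [hg.form_apply_of_eq_zero i j h0, hg.form_apply_of_eq_zero j i (by rwa [M.symmetric j i])]
  · rw [hg.form_apply_of_ne_zero i j h0,
      hg.form_apply_of_ne_zero j i (by rwa [M.symmetric j i]), M.symmetric j i]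


lemma bform_offdiag_nonpos {i j : I} (hij : i ≠ j) : B (sroot i) (sroot j) ≤ 0 := by
  by_cases h0 : M i j = 0
  · rw [hg.form_apply_of_eq_zero i j h0]; norm_num
  · rw [hg.form_apply_of_ne_zero i j h0]
    have h2 : (2 : ℝ) ≤ (M i j : ℝ) := by exact_mod_cast two_le_M (M := M) hij h0
    have hcos : 0 ≤ Real.cos (Real.pi / (M i j : ℝ)) := by
      apply Real.cos_nonneg_of_mem_Icc
      constructor
      · have : 0 ≤ Real.pi / (M i j : ℝ) := by positivity
        linarith [Real.pi_pos]
      · calc Real.pi / (M i j : ℝ) ≤ Real.pi / 2 :=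
              div_le_div_of_nonneg_left Real.pi_pos.le (by norm_num) h2
          _ ≤ Real.pi / 2 := le_refl _
    linarith

lemma bform_eq_zero_of_two {i j : I} (h2 : M i j = 2) : B (sroot i) (sroot j) = 0 := by
  rw [hg.form_apply_of_ne_zero i j (by rw [h2]; norm_num), h2]
  norm_num [Real.cos_pi_div_two]

lemma bform_neg {i j : I} (hij : i ≠ j) (h2 : M i j ≠ 2) : B (sroot i) (sroot j) < 0 := by
  by_cases h0 : M i j = 0
  · rw [hg.form_apply_of_eq_zero i j h0]; norm_num
  · have h3 : 3 ≤ M i j := by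
      have := two_le_M (M := M) hij h0
      omega
    rw [hg.form_apply_of_ne_zero i j h0]
    have h3' : (3 : ℝ) ≤ (M i j : ℝ) := by exact_mod_cast h3
    have hcos : 0 < Real.cos (Real.pi / (M i j : ℝ)) := by
      apply Real.cos_pos_of_mem_Ioo
      constructor
      · have : 0 < Real.pi / (M i j : ℝ) := by positivity
        linarith [Real.pi_pos]
      · calc Real.pi / (M i j : ℝ) ≤ Real.pi / 3 :=
              div_le_div_of_nonneg_left Real.pi_pos.le (by norm_num) h3'
          _ < Real.pi / 2 := by linarith [Real.pi_pos]
    linarith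

omit hg

lemma pi_eq_sum_sroot (x : I → ℝ) : x = ∑ t, x t • sroot t := by
  funext u
  rw [Finset.sum_apply]
  have : ∀ t, (x t • sroot t) u = if u = t then x t else 0 := by
    intro t
    by_cases h : u = t
    · subst h; simp [sroot]
    · simp [sroot_apply_ne h, h]
  simp_rw [this]
  simp

lemma bform_expand (x : I → ℝ) (k : I) :
    B x (sroot k) = ∑ t, x t * B (sroot t) (sroot k) := by
  conv_lhs => rw [pi_eq_sum_sroot x]
  rw [map_sum]
  rw [LinearMap.sum_apply]
  congr 1
  funext t
  rw [map_smul, LinearMap.smul_apply, smul_eq_mul]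

include hg

lemma bform_nonpos_of_zero_coord {x : I → ℝ} {k : I} (hx : 0 ≤ x) (hk : x k = 0) :
    B x (sroot k) ≤ 0 := by
  rw [bform_expand]
  apply Finset.sum_nonpos
  intro t _
  by_cases h : t = k
  · subst h; simp [hk]
  · exact mul_nonpos_of_nonneg_of_nonpos (hx t) (bform_offdiag_nonpos hg h)

lemma simple_coord_ne {i k : I} (h : k ≠ i) (x : I → ℝ) :
    (ρ (s i) x) k = x k := by
  rw [hg.simple_apply]
  simp [sroot_apply_ne h]

lemma simple_coord_self (i : I) (x : I → ℝ) :
    (ρ (s i) x) i = x i - 2 * B x (sroot i) := by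
  rw [hg.simple_apply]
  simp [sroot]

omit hg

lemma rho_mul_apply (w₁ w₂ : W) (x : I → ℝ) : ρ (w₁ * w₂) x = ρ w₁ (ρ w₂ x) := by
  rw [map_mul]
  rfl

lemma rho_eq_zero {w : W} {x : I → ℝ} (h : ρ w x = 0) : x = 0 := by
  have h2 : ρ w⁻¹ (ρ w x) = x := by
    rw [← rho_mul_apply, inv_mul_cancel, map_one]
    rfl
  rw [h, map_zero] at h2
  exact h2.symm

include hg

lemma wordProd_coord {ω : List I} {k : I} (h : k ∉ ω) (x : I → ℝ) :
    (ρ (π ω) x) k = x k := by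
  induction ω with
  | nil => rw [wordProd_nil, map_one]; rfl
  | cons t ω ih =>
    have hkt : k ≠ t := fun hc => h (by simp [hc])
    rw [wordProd_cons, rho_mul_apply, simple_coord_ne hg hkt]
    exact ih (fun hc => h (mem_cons_of_mem t hc))

lemma simple_apply_nonneg {x : I → ℝ} {t : I} (hx : 0 ≤ x) (ht : x t = 0) :
    0 ≤ ρ (s t) x ∧ ∀ k, k ≠ t → (ρ (s t) x) k = x k := by
  constructor
  · intro k
    simp only [Pi.zero_apply]
    by_cases h : k = t
    · subst h
      rw [simple_coord_self hg]
      have := bform_nonpos_of_zero_coord hg hx ht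
      linarith
    · rw [simple_coord_ne hg h]; exact hx k
  · intro k h
    exact simple_coord_ne hg h x

/-- Key elementary positivity: a nodup word avoiding the support of a nonneg vector
keeps it nonneg. -/
lemma wordProd_nonneg {ω : List I} (hnd : ω.Nodup) {x : I → ℝ} (hx : 0 ≤ x)
    (hz : ∀ t ∈ ω, x t = 0) : 0 ≤ ρ (π ω) x := by
  induction ω with
  | nil => rw [wordProd_nil, map_one]; exact hx
  | cons t ω ih =>
    rw [wordProd_cons, rho_mul_apply]
    have hnd' := (List.nodup_cons.mp hnd).2
    have htω := (List.nodup_cons.mp hnd).1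
    have hy : 0 ≤ ρ (π ω) x := ih hnd' (fun u hu => hz u (mem_cons_of_mem t hu))
    have hyt : (ρ (π ω) x) t = x t := wordProd_coord hg htω x
    exact (simple_apply_nonneg hg hy (by rw [hyt]; exact hz t mem_cons_self)).1

end geom

end BKBilliards
namespace BKBilliards

open CoxeterSystem List

set_option linter.unusedSectionVars false

variable {I : Type*} [Fintype I] [DecidableEq I]
variable {M : CoxeterMatrix I} {W : Type*} [Group W]
variable {cs : CoxeterSystem M W} {ρ : Representation ℝ W (I → ℝ)}
variable {B : LinearMap.BilinForm ℝ (I → ℝ)}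

local prefix:100 "s" => cs.simple
local prefix:100 "π" => cs.wordProd
local prefix:100 "ℓ" => cs.length

section geom

variable (hg : IsGeometric cs ρ B)
include hg

lemma star1 (i : I) : ∀ (ω : List I), ω.Nodup → i ∉ ω →
    0 ≤ ρ (π ω) (sroot i) ∧ (ρ (π ω) (sroot i)) i = 1 ∧
    (∀ k, k ∉ ω → k ≠ i → (ρ (π ω) (sroot i)) k = 0) ∧
    (∀ t ∈ ω, M i t ≠ 2 → ∃ t', t' ∈ ω ∧ t' ≠ i ∧ 0 < (ρ (π ω) (sroot i)) t') := by
  intro ω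
  induction ω with
  | nil =>
    intro _ _
    simp only [wordProd_nil, map_one, Module.End.one_apply]
    refine ⟨sroot_nonneg i, by simp, ?_, by simp⟩
    intro k _ hk
    simpa using sroot_apply_ne hk
  | cons t ω ih =>
    intro hnd hiω
    have htω : t ∉ ω := (List.nodup_cons.mp hnd).1
    have hnd' : ω.Nodup := (List.nodup_cons.mp hnd).2
    have hti : t ≠ i := fun hc => hiω (by simp [hc])
    have hiω' : i ∉ ω := fun hc => hiω (mem_cons_of_mem t hc)
    obtain ⟨hpos, hone, hout, hnbr⟩ := ih hnd' hiω'
    set γ := ρ (π ω) (sroot i) with hγ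
    have hγt : γ t = 0 := hout t htω hti
    have hexp : ∀ x, ρ (π (t :: ω)) (sroot i) x = (ρ (s t) γ) x := by
      intro x
      rw [wordProd_cons, rho_mul_apply]
    have hB0 : B γ (sroot t) ≤ 0 := bform_nonpos_of_zero_coord hg hpos hγt
    have hnn := (simple_apply_nonneg hg hpos hγt).1
    have hunch := (simple_apply_nonneg hg hpos hγt).2
    refine ⟨?_, ?_, ?_, ?_⟩
    · intro x; rw [hexp x]; exact hnn x
    · rw [hexp i, hunch i hti.symm]; exact hone
    · intro k hk hki
      have hkt : k ≠ t := fun hc => hk (by simp [hc])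
      rw [hexp k, hunch k hkt]
      exact hout k (fun hc => hk (mem_cons_of_mem t hc)) hki
    · intro t0 ht0 hM
      rcases List.mem_cons.mp ht0 with h1 | h1
      · -- the new letter t0 = t is a neighbor: its coordinate becomes positive
        subst h1
        refine ⟨t0, mem_cons_self, hti, ?_⟩
        rw [hexp t0, simple_coord_self hg, hγt]
        have hlt : B γ (sroot t0) < 0 := by
          rw [bform_expand]
          have hsum : ∑ u, γ u * B (sroot u) (sroot t0) ≤
              ∑ u, (if u = i then B (sroot i) (sroot t0) else 0) := by
            apply Finset.sum_le_sum
            intro u _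
            by_cases hu : u = i
            · subst hu; rw [if_pos rfl, hone]; ring_nf; exact le_refl _
            · rw [if_neg hu]
              by_cases hut : u = t0
              · subst hut; rw [hγt]; ring_nf; exact le_refl _
              · exact mul_nonpos_of_nonneg_of_nonpos (hpos u) (bform_offdiag_nonpos hg hut)
          have hsum2 : ∑ u, (if u = i then B (sroot i) (sroot t0) else 0)
              = B (sroot i) (sroot t0) := by
            rw [Finset.sum_ite_eq' Finset.univ i (fun _ => B (sroot i) (sroot t0))]
            simp
          have hneg : B (sroot i) (sroot t0) < 0 := bform_neg hg (fun hc => hti hc.symm) hM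
          linarith
        linarith
      · obtain ⟨t', ht'ω, ht'i, ht'pos⟩ := hnbr t0 h1 hM
        have ht't : t' ≠ t := fun hc => htω (hc ▸ ht'ω)
        exact ⟨t', mem_cons_of_mem t ht'ω, ht'i, by rw [hexp t', hunch t' ht't]; exact ht'pos⟩

/-- Every word representing the same element as a duplicate-free word uses all its letters. -/
lemma mem_of_wordProd_eq {l0 ω : List I} (hnd : l0.Nodup) (heq : π l0 = π ω)
    {i : I} (hi : i ∈ l0) : i ∈ ω := by
  by_contra hiω
  obtain ⟨a0, b0, rfl⟩ := List.append_of_mem hi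
  have hia0 : i ∉ a0 := by
    have := List.disjoint_of_nodup_append hnd
    exact fun hc => this hc mem_cons_self
  have hib0 : i ∉ b0 := by
    have h2 := (List.nodup_append'.mp hnd).2.1
    exact (List.nodup_cons.mp h2).1
  set x := ρ ((π ω)⁻¹ * (π a0)) (sroot i) with hx
  have hxi : x i = -1 := by
    have hgrp : (π ω)⁻¹ * (π a0) = (π (reverse b0)) * (s i) := by
      rw [← heq, wordProd_append, wordProd_cons, wordProd_reverse]
      simp [mul_inv_rev, mul_assoc, cs.inv_simple]
    rw [hx, hgrp, rho_mul_apply]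
    have h1 : ρ (s i) (sroot i) = -sroot i := by
      rw [hg.simple_apply, bform_diag hg]
      funext u
      simp only [Pi.sub_apply, Pi.smul_apply, Pi.neg_apply, smul_eq_mul]
      ring
    rw [h1, map_neg]
    have : (ρ (π (reverse b0)) (sroot i)) i = 1 := by
      rw [wordProd_coord hg (by simpa using hib0)]
      simp
    simp only [Pi.neg_apply, this]
  have hxi2 : (ρ (π ω) x) i = x i := wordProd_coord hg hiω x
  have hxi3 : ρ (π ω) x = ρ (π a0) (sroot i) := by
    rw [hx, ← rho_mul_apply]
    congr 1
    group
  have hxi4 : (ρ (π a0) (sroot i)) i = 1 := by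
    rw [wordProd_coord hg hia0]
    simp
  rw [hxi3, hxi4] at hxi2
  rw [hxi] at hxi2
  norm_num at hxi2

omit hg

lemma length_wordProd_mod_two (ω : List I) : ℓ (π ω) % 2 = ω.length % 2 := by
  induction ω with
  | nil => simp
  | cons t ω ih =>
    rw [wordProd_cons]
    rcases cs.length_simple_mul (π ω) t with h | h
    · simp only [List.length_cons]; omega
    · simp only [List.length_cons]; omega

end geom

end BKBilliards
namespace BKBilliards

open CoxeterSystem List

set_option linter.unusedSectionVars false

/-- Chebyshev-like sequence: `sig c t = sin (t θ) / sin θ` when `c = cos θ`. -/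
noncomputable def sig (c : ℝ) : ℕ → ℝ
  | 0 => 0
  | 1 => 1
  | (t+2) => 2*c*sig c (t+1) - sig c t

@[simp] lemma sig_zero (c : ℝ) : sig c 0 = 0 := rfl
@[simp] lemma sig_one (c : ℝ) : sig c 1 = 1 := rfl
lemma sig_succ_succ (c : ℝ) (t : ℕ) : sig c (t+2) = 2*c*sig c (t+1) - sig c t := rfl

lemma sig_one_eq (t : ℕ) : sig 1 t = t := by
  induction t using Nat.strong_induction_on with
  | _ t ih =>
    match t with
    | 0 => simp
    | 1 => simp
    | (t+2) =>
      rw [sig_succ_succ, ih (t+1) (by omega), ih t (by omega)]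
      push_cast
      ring

lemma sig_sin {m : ℕ} (hm : 2 ≤ m) (t : ℕ) :
    sig (Real.cos (Real.pi / m)) t * Real.sin (Real.pi / m) = Real.sin (t * (Real.pi / m)) := by
  set θ := Real.pi / m with hθ
  induction t using Nat.strong_induction_on with
  | _ t ih =>
    match t with
    | 0 => simp
    | 1 => simp
    | (t+2) =>
      have key : Real.sin (((t:ℝ)+2) * θ) =
          2 * Real.cos θ * Real.sin (((t:ℝ)+1) * θ) - Real.sin ((t:ℝ) * θ) := by
        have e1 : ((t:ℝ)+2)*θ = ((t:ℝ)+1)*θ + θ := by ring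
        have e2 : (t:ℝ)*θ = ((t:ℝ)+1)*θ - θ := by ring
        rw [e1, e2, Real.sin_add, Real.sin_sub]
        ring
      have h1 := ih (t+1) (by omega)
      have h2 := ih t (by omega)
      rw [sig_succ_succ]
      push_cast at h1 h2 ⊢
      rw [key, ← h1, ← h2]
      ring

lemma sig_nonneg {m : ℕ} (hm : 2 ≤ m) {t : ℕ} (ht : t ≤ m) :
    0 ≤ sig (Real.cos (Real.pi / m)) t := by
  have hm' : (2:ℝ) ≤ (m:ℝ) := by exact_mod_cast hm
  have hθpos : 0 < Real.pi / m := by positivity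
  have hθlt : Real.pi / m < Real.pi := by
    rw [div_lt_iff₀ (by linarith)]
    nlinarith [Real.pi_pos]
  have hsin : 0 < Real.sin (Real.pi / m) := Real.sin_pos_of_pos_of_lt_pi hθpos hθlt
  have hts : 0 ≤ Real.sin (t * (Real.pi / m)) := by
    apply Real.sin_nonneg_of_nonneg_of_le_pi
    · positivity
    · have ht' : (t:ℝ) ≤ (m:ℝ) := by exact_mod_cast ht
      calc (t:ℝ) * (Real.pi / m) ≤ (m:ℝ) * (Real.pi / m) := by
            apply mul_le_mul_of_nonneg_right ht' (le_of_lt hθpos)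
        _ = Real.pi := by field_simp
  have := sig_sin hm t
  nlinarith

variable {I : Type*} [Fintype I] [DecidableEq I]
variable {M : CoxeterMatrix I} {W : Type*} [Group W]
variable {cs : CoxeterSystem M W} {ρ : Representation ℝ W (I → ℝ)}
variable {B : LinearMap.BilinForm ℝ (I → ℝ)}

local prefix:100 "s" => cs.simple
local prefix:100 "π" => cs.wordProd
local prefix:100 "ℓ" => cs.length

/-! ### Two-letter words -/

lemma mem_alternatingWord_or {x y t : I} : ∀ {r : ℕ}, t ∈ CoxeterSystem.alternatingWord x y r →
    t = x ∨ t = y := by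
  intro r
  induction r generalizing x y with
  | zero => intro h; simp [CoxeterSystem.alternatingWord] at h
  | succ r ih =>
    intro h
    rw [CoxeterSystem.alternatingWord_succ, List.concat_eq_append, List.mem_append] at h
    rcases h with h | h
    · rcases ih h with h1 | h1
      · right; exact h1
      · left; exact h1
    · right; simpa using h

lemma not_chain'_shape : ∀ (ω : List I), ¬ List.Chain' (· ≠ ·) ω →
    ∃ ω₁ t ω₂, ω = ω₁ ++ t :: t :: ω₂ := by
  intro ω
  induction ω with
  | nil => intro h; exact absurd List.isChain_nil h
  | cons t₁ rest ih =>
    intro h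
    match rest, h with
    | [], h => exact absurd (List.isChain_singleton t₁) h
    | (t₂ :: rest), h =>
      simp only [List.Chain', List.isChain_cons_cons] at h
      push_neg at h
      by_cases h12 : t₁ = t₂
      · subst h12
        exact ⟨[], t₁, rest, rfl⟩
      · obtain ⟨ω₁, t, ω₂, heq⟩ := ih (h h12)
        exact ⟨t₁ :: ω₁, t, ω₂, by rw [heq]; rfl⟩

lemma two_letter_chain_shape {x y : I} : ∀ (ω : List I), (∀ t ∈ ω, t = x ∨ t = y) →
    List.Chain' (· ≠ ·) ω →
    ω = CoxeterSystem.alternatingWord x y ω.length ∨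
    ω = CoxeterSystem.alternatingWord y x ω.length := by
  intro ω
  induction ω with
  | nil => intro _ _; left; rfl
  | cons t₁ rest ih =>
    intro hD hch
    match rest, hch with
    | [], _ =>
      rcases hD t₁ (by simp) with h | h
      · subst h; right; rfl
      · subst h; left; rfl
    | (t₂ :: rest), hch =>
      simp only [List.Chain', List.isChain_cons_cons] at hch
      have hD' : ∀ t ∈ t₂ :: rest, t = x ∨ t = y := fun t ht => hD t (List.mem_cons_of_mem _ ht)
      have ht₁xy := hD t₁ (by simp)
      have hlen : (t₂ :: rest).length = rest.length + 1 := rfl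
      rcases ih hD' hch.2 with hshape | hshape
      · left
        have ht₂ : t₂ = (if Even rest.length then y else x) := by
          have h2 := hshape
          rw [hlen, CoxeterSystem.alternatingWord_succ'] at h2
          exact (List.cons.inj h2).1
        show t₁ :: t₂ :: rest = CoxeterSystem.alternatingWord x y ((t₂ :: rest).length + 1)
        rw [CoxeterSystem.alternatingWord_succ', ← hshape]
        congr 1
        rw [hlen]
        rcases Nat.even_or_odd rest.length with he | he
        · have h2y : t₂ = y := by simpa [he] using ht₂
          have h1x : t₁ = x := by
            rcases ht₁xy with h | h
            · exact h
            · exact absurd (h.trans h2y.symm) hch.1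
          simp [Nat.even_add_one, he, h1x]
        · have h2x : t₂ = x := by simpa [Nat.not_even_iff_odd.2 he] using ht₂
          have h1y : t₁ = y := by
            rcases ht₁xy with h | h
            · exact absurd (h.trans h2x.symm) hch.1
            · exact h
          simp [Nat.even_add_one, Nat.not_even_iff_odd.2 he, h1y]
      · right
        have ht₂ : t₂ = (if Even rest.length then x else y) := by
          have h2 := hshape
          rw [hlen, CoxeterSystem.alternatingWord_succ'] at h2
          exact (List.cons.inj h2).1
        show t₁ :: t₂ :: rest = CoxeterSystem.alternatingWord y x ((t₂ :: rest).length + 1)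
        rw [CoxeterSystem.alternatingWord_succ', ← hshape]
        congr 1
        rw [hlen]
        rcases Nat.even_or_odd rest.length with he | he
        · have h2x : t₂ = x := by simpa [he] using ht₂
          have h1y : t₁ = y := by
            rcases ht₁xy with h | h
            · exact absurd (h.trans h2x.symm) hch.1
            · exact h
          simp [Nat.even_add_one, he, h1y]
        · have h2y : t₂ = y := by simpa [Nat.not_even_iff_odd.2 he] using ht₂
          have h1x : t₁ = x := by
            rcases ht₁xy with h | h
            · exact h
            · exact absurd (h.trans h2y.symm) hch.1
          simp [Nat.even_add_one, Nat.not_even_iff_odd.2 he, h1x]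


/-! ### Root formula for alternating words -/

section geom

variable (hg : IsGeometric cs ρ B)
include hg

lemma rho_simple_sroot_self (i : I) : ρ (s i) (sroot i) = -sroot i := by
  rw [hg.simple_apply, bform_diag hg]
  module

lemma alt_root_formula {x y : I} (hxy : x ≠ y) (r : ℕ) :
    ρ (π (CoxeterSystem.alternatingWord x y r)) (sroot x) =
      if Even r then
        sig (-(B (sroot x) (sroot y))) (r+1) • sroot x +
          sig (-(B (sroot x) (sroot y))) r • sroot y
      else
        sig (-(B (sroot x) (sroot y))) r • sroot x +
          sig (-(B (sroot x) (sroot y))) (r+1) • sroot y := by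
  set c := -(B (sroot x) (sroot y)) with hc
  have hBxy : B (sroot x) (sroot y) = -c := by rw [hc]; ring
  have hByx : B (sroot y) (sroot x) = -c := by rw [← bform_symm hg]; exact hBxy
  have e1 : ρ (s y) (sroot x) = sroot x + (2*c) • sroot y := by
    rw [hg.simple_apply, hBxy]
    module
  have e2 : ρ (s y) (sroot y) = -sroot y := rho_simple_sroot_self hg y
  have e3 : ρ (s x) (sroot y) = sroot y + (2*c) • sroot x := by
    rw [hg.simple_apply, hByx]
    module
  have e4 : ρ (s x) (sroot x) = -sroot x := rho_simple_sroot_self hg x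
  induction r with
  | zero =>
    have : π (CoxeterSystem.alternatingWord x y 0) = 1 := by
      show π ([] : List I) = 1
      exact cs.wordProd_nil
    rw [this, map_one, if_pos (Even.zero)]
    show sroot x = sig c 1 • sroot x + sig c 0 • sroot y
    simp
  | succ r ih =>
    rw [CoxeterSystem.alternatingWord_succ', wordProd_cons, rho_mul_apply, ih]
    rcases Nat.even_or_odd r with he | ho
    · rw [if_pos he, if_pos he, if_neg (by simp [Nat.even_add_one, he])]
      calc ρ (s y) (sig c (r+1) • sroot x + sig c r • sroot y)
          = sig c (r+1) • (sroot x + (2*c) • sroot y) + sig c r • (-sroot y) := by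
            rw [map_add, map_smul, map_smul, e1, e2]
        _ = sig c (r+1) • sroot x + (2*c*sig c (r+1) - sig c r) • sroot y := by module
        _ = sig c (r+1) • sroot x + sig c (r+1+1) • sroot y := by rw [sig_succ_succ]
    · have hne : ¬ Even r := Nat.not_even_iff_odd.2 ho
      rw [if_neg hne, if_neg hne, if_pos (by simp [Nat.even_add_one, hne])]
      calc ρ (s x) (sig c r • sroot x + sig c (r+1) • sroot y)
          = sig c r • (-sroot x) + sig c (r+1) • (sroot y + (2*c) • sroot x) := by
            rw [map_add, map_smul, map_smul, e3, e4]
        _ = (2*c*sig c (r+1) - sig c r) • sroot x + sig c (r+1) • sroot y := by module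
        _ = sig c (r+1+1) • sroot x + sig c (r+1) • sroot y := by rw [sig_succ_succ]

end geom

/-! ### Dihedral subsets and dihedral length -/

/-- Words in the two letters `x, y`. -/
def DWord (x y : I) (ω : List I) : Prop := ∀ t ∈ ω, t = x ∨ t = y

/-- The set of elements expressible as words in `s x, s y`. -/
def DSet (cs : CoxeterSystem M W) (x y : I) : Set W := {u | ∃ ω, DWord x y ω ∧ cs.wordProd ω = u}

/-- Dihedral word length. -/
noncomputable def dlen (cs : CoxeterSystem M W) (x y : I) (u : W) : ℕ :=
  sInf {n | ∃ ω, DWord x y ω ∧ ω.length = n ∧ cs.wordProd ω = u}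

lemma dword_comm {x y : I} {ω : List I} (h : DWord x y ω) : DWord y x ω :=
  fun t ht => (h t ht).symm

lemma dset_comm (x y : I) : DSet cs x y = DSet cs y x := by
  ext u
  constructor <;> rintro ⟨ω, h1, h2⟩ <;> exact ⟨ω, dword_comm h1, h2⟩

lemma dlen_comm (x y : I) (u : W) : dlen cs x y u = dlen cs y x u := by
  unfold dlen
  congr 1
  ext n
  constructor <;> rintro ⟨ω, h1, h2, h3⟩ <;> exact ⟨ω, dword_comm h1, h2, h3⟩

lemma one_mem_dset (x y : I) : (1 : W) ∈ DSet cs x y :=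
  ⟨[], fun t ht => absurd ht (by simp), cs.wordProd_nil⟩

lemma mul_simple_mem_dset {x y : I} {u : W} (hu : u ∈ DSet cs x y) {k : I} (hk : k = x ∨ k = y) :
    u * s k ∈ DSet cs x y := by
  obtain ⟨ω, h1, h2⟩ := hu
  refine ⟨ω ++ [k], ?_, ?_⟩
  · intro t ht
    rcases List.mem_append.mp ht with h | h
    · exact h1 t h
    · simp at h; subst h; exact hk
  · rw [wordProd_append, h2, wordProd_singleton]

lemma inv_mem_dset {x y : I} {u : W} (hu : u ∈ DSet cs x y) : u⁻¹ ∈ DSet cs x y := by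
  obtain ⟨ω, h1, h2⟩ := hu
  exact ⟨ω.reverse, fun t ht => h1 t (List.mem_reverse.mp ht), by rw [wordProd_reverse, h2]⟩

lemma dlen_le {x y : I} {ω : List I} (h : DWord x y ω) {u : W} (hprod : cs.wordProd ω = u) :
    dlen cs x y u ≤ ω.length :=
  Nat.sInf_le ⟨ω, h, rfl, hprod⟩

lemma dlen_spec {x y : I} {u : W} (hu : u ∈ DSet cs x y) :
    ∃ ω, DWord x y ω ∧ ω.length = dlen cs x y u ∧ cs.wordProd ω = u := by
  have hne : {n | ∃ ω, DWord x y ω ∧ ω.length = n ∧ cs.wordProd ω = u}.Nonempty := by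
    obtain ⟨ω, h1, h2⟩ := hu
    exact ⟨ω.length, ω, h1, rfl, h2⟩
  exact Nat.sInf_mem hne

lemma dlen_parity {x y : I} {u : W} (hu : u ∈ DSet cs x y) :
    dlen cs x y u % 2 = ℓ u % 2 := by
  obtain ⟨ω, h1, h2, h3⟩ := dlen_spec hu
  rw [← h2, ← h3, length_wordProd_mod_two]

lemma dlen_one (x y : I) : dlen cs x y (1 : W) = 0 := by
  have hD : DWord x y ([] : List I) := fun t ht => absurd ht (by simp)
  have := dlen_le hD cs.wordProd_nil
  simpa using this

lemma dlen_mul_simple {x y : I} {u : W} (hu : u ∈ DSet cs x y) {k : I} (hk : k = x ∨ k = y) :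
    dlen cs x y (u * s k) = dlen cs x y u + 1 ∨
      dlen cs x y (u * s k) + 1 = dlen cs x y u := by
  have le1 : dlen cs x y (u * s k) ≤ dlen cs x y u + 1 := by
    obtain ⟨ω, h1, h2, h3⟩ := dlen_spec hu
    have hDk : DWord x y (ω ++ [k]) := by
      intro t ht
      rcases List.mem_append.mp ht with h | h
      · exact h1 t h
      · simp at h; subst h; exact hk
    have hPk : cs.wordProd (ω ++ [k]) = u * s k := by
      rw [wordProd_append, h3, wordProd_singleton]
    have := dlen_le hDk hPk
    simp only [List.length_append, List.length_singleton, h2] at this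
    omega
  have le2 : dlen cs x y u ≤ dlen cs x y (u * s k) + 1 := by
    obtain ⟨ω, h1, h2, h3⟩ := dlen_spec (mul_simple_mem_dset hu hk)
    have hDk : DWord x y (ω ++ [k]) := by
      intro t ht
      rcases List.mem_append.mp ht with h | h
      · exact h1 t h
      · simp at h; subst h; exact hk
    have hPk : cs.wordProd (ω ++ [k]) = u := by
      rw [wordProd_append, h3, wordProd_singleton, cs.simple_mul_simple_cancel_right]
    have := dlen_le hDk hPk
    simp only [List.length_append, List.length_singleton, h2] at this
    omega
  have hne : dlen cs x y (u * s k) ≠ dlen cs x y u := by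
    have p1 := dlen_parity hu
    have p2 := dlen_parity (mul_simple_mem_dset hu hk)
    have p3 := cs.length_mul_simple u k
    omega
  omega

lemma alternatingWord_add_even (x y : I) (a b : ℕ) (hb : Even b) :
    CoxeterSystem.alternatingWord x y (a + b) =
      CoxeterSystem.alternatingWord x y a ++ CoxeterSystem.alternatingWord x y b := by
  induction a with
  | zero => simp [CoxeterSystem.alternatingWord]
  | succ a ih =>
    have hstep : a + 1 + b = (a + b) + 1 := by omega
    rw [hstep, CoxeterSystem.alternatingWord_succ', ih, CoxeterSystem.alternatingWord_succ',
      List.cons_append]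
    have heq : Even (a + b) ↔ Even a := by
      rw [Nat.even_add]
      exact ⟨fun h => h.mpr hb, fun h => ⟨fun _ => hb, fun _ => h⟩⟩
    by_cases he : Even a
    · rw [if_pos (heq.mpr he), if_pos he]
    · rw [if_neg (fun hc => he (heq.mp hc)), if_neg he]

lemma dword_alternatingWord (x y : I) (r : ℕ) : DWord x y (CoxeterSystem.alternatingWord x y r) :=
  fun t ht => mem_alternatingWord_or ht

section geom

variable (hg : IsGeometric cs ρ B)
include hg

/-- The main rank-two lemma: if `u` lies in the dihedral subgroup generated by `s x, s y` and
right multiplication by `s x` increases the dihedral length, then `u` maps `α_x` into the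
nonnegative cone spanned by `α_x, α_y`. -/
lemma d3_main {x y : I} (hxy : x ≠ y) {u : W} (hu : u ∈ DSet cs x y)
    (hasc : dlen cs x y u < dlen cs x y (u * s x)) :
    ∃ a b : ℝ, 0 ≤ a ∧ 0 ≤ b ∧ ρ u (sroot x) = a • sroot x + b • sroot y := by
  obtain ⟨ω, hD, hlen, hprod⟩ := dlen_spec hu
  by_cases hr0 : dlen cs x y u = 0
  · have : u = 1 := by
      rw [hr0] at hlen
      rw [List.length_eq_zero_iff] at hlen
      rw [hlen] at hprod
      rw [cs.wordProd_nil] at hprod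
      exact hprod.symm
    subst this
    exact ⟨1, 0, by norm_num, by norm_num, by rw [map_one]; show sroot x = _; simp⟩
  have hch : List.Chain' (· ≠ ·) ω := by
    by_contra hc
    obtain ⟨ω₁, t, ω₂, rfl⟩ := not_chain'_shape ω hc
    have hD2 : DWord x y (ω₁ ++ ω₂) := by
      intro u hu2
      apply hD
      simp at hu2 ⊢
      tauto
    have hprod2 : π (ω₁ ++ ω₂) = u := by
      rw [← hprod, wordProd_append, wordProd_append, wordProd_cons, wordProd_cons,
        cs.simple_mul_simple_cancel_left]
    have hle := dlen_le hD2 hprod2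
    have hl1 : (ω₁ ++ t :: t :: ω₂).length = ω₁.length + ω₂.length + 2 := by
      simp
      omega
    have hl2 : (ω₁ ++ ω₂).length = ω₁.length + ω₂.length := by simp
    omega
  rcases two_letter_chain_shape ω hD hch with hshape | hshape
  · -- ω = alternatingWord x y r : ends with y
    set r := dlen cs x y u with hrdef
    rw [hlen] at hshape
    set m := M x y with hm
    have hsymM : M y x = m := by rw [hm, M.symmetric]
    -- an ascent at x: the word ω ++ [x] = alternatingWord y x (r+1)
    have hconcat : CoxeterSystem.alternatingWord y x (r+1) =
        CoxeterSystem.alternatingWord x y r ++ [x] := by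
      rw [CoxeterSystem.alternatingWord_succ]
      simp
    have hprod3 : π (CoxeterSystem.alternatingWord y x (r+1)) = u * s x := by
      rw [hconcat, wordProd_append, ← hshape, hprod, wordProd_singleton]
    -- bound r < 2 * m  (when m ≠ 0)
    have hbig : m ≠ 0 → r < 2 * m := by
      intro hm0
      by_contra hc
      push_neg at hc
      have hsplit : CoxeterSystem.alternatingWord x y r =
          CoxeterSystem.alternatingWord x y (r - 2*m) ++ CoxeterSystem.alternatingWord x y (2*m) := by
        rw [← alternatingWord_add_even x y (r - 2*m) (2*m) (by exact ⟨m, by omega⟩)]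
        congr 1
        omega
      have hred : π (CoxeterSystem.alternatingWord x y (2*m)) = 1 := by
        have := cs.prod_alternatingWord_eq_prod_alternatingWord_sub x y (2*m) (by omega)
        rw [this]
        have h0 : M.M x y * 2 - 2*m = 0 := by omega
        rw [h0]
        exact cs.wordProd_nil
      have hu2 : π (CoxeterSystem.alternatingWord x y (r - 2*m)) = u := by
        rw [← hprod, hshape, hsplit, wordProd_append, hred, mul_one]
      have hle := dlen_le (dword_alternatingWord x y (r - 2*m)) hu2
      rw [CoxeterSystem.length_alternatingWord] at hle
      omega
    -- bound r + 1 ≤ m (when m ≠ 0), using the ascent hypothesis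
    have hbound : m ≠ 0 → r + 1 ≤ m := by
      intro hm0
      have hb := hbig hm0
      have hred := cs.prod_alternatingWord_eq_prod_alternatingWord_sub y x (r+1)
        (by rw [hsymM]; omega)
      rw [hprod3] at hred
      have hle := dlen_le (dword_alternatingWord x y (M.M y x * 2 - (r+1))) hred.symm
      rw [CoxeterSystem.length_alternatingWord] at hle
      have : M.M y x = m := hsymM
      omega
    -- now apply the root formula
    have hform := alt_root_formula hg hxy r
    rw [← hshape, hprod] at hform
    set c := -(B (sroot x) (sroot y)) with hc
    have hsig1 : 0 ≤ sig c r ∧ 0 ≤ sig c (r+1) := by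
      by_cases hm0 : m = 0
      · have hcval : c = 1 := by
          rw [hc, hg.form_apply_of_eq_zero x y (by rw [← hm]; exact hm0)]
          norm_num
        rw [hcval, sig_one_eq, sig_one_eq]
        constructor <;> positivity
      · have h2m : 2 ≤ m := by
          have := two_le_M (M := M) hxy (by rw [← hm]; exact hm0)
          omega
        have hcval : c = Real.cos (Real.pi / m) := by
          rw [hc, hg.form_apply_of_ne_zero x y (by rw [← hm]; exact hm0), ← hm]
          ring
        have hb := hbound hm0
        rw [hcval]
        exact ⟨sig_nonneg h2m (by omega), sig_nonneg h2m (by omega)⟩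
    rcases Nat.even_or_odd r with he | ho
    · rw [if_pos he] at hform
      exact ⟨sig c (r+1), sig c r, hsig1.2, hsig1.1, hform⟩
    · rw [if_neg (Nat.not_even_iff_odd.2 ho)] at hform
      exact ⟨sig c r, sig c (r+1), hsig1.1, hsig1.2, hform⟩
  · -- ω = alternatingWord y x r : ends with x, contradicting the ascent at x
    exfalso
    set r := dlen cs x y u with hrdef
    rw [hlen] at hshape
    have hr1 : 1 ≤ r := by omega
    have hconcat : CoxeterSystem.alternatingWord y x r =
        CoxeterSystem.alternatingWord x y (r-1) ++ [x] := by
      have hstep : r = (r - 1) + 1 := by omega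
      rw [hstep, CoxeterSystem.alternatingWord_succ]
      simp
    have : π (CoxeterSystem.alternatingWord x y (r-1)) = u * s x := by
      have h1 : u = π (CoxeterSystem.alternatingWord x y (r-1)) * s x := by
        rw [← hprod, hshape, hconcat, wordProd_append, wordProd_singleton]
      rw [h1, cs.simple_mul_simple_cancel_right]
    have hle := dlen_le (dword_alternatingWord x y (r-1)) this
    rw [CoxeterSystem.length_alternatingWord] at hle
    omega

/-- Symmetric version of the rank-two lemma, for either generator. -/
lemma d3' {x y : I} (hxy : x ≠ y) {u : W} (hu : u ∈ DSet cs x y) {k : I} (hk : k = x ∨ k = y)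
    (hasc : dlen cs x y u < dlen cs x y (u * s k)) :
    ∃ a b : ℝ, 0 ≤ a ∧ 0 ≤ b ∧ ρ u (sroot k) = a • sroot x + b • sroot y := by
  rcases hk with hk | hk
  · subst hk
    exact d3_main hg hxy hu hasc
  · subst hk
    have hu' : u ∈ DSet cs k x := by rw [← dset_comm]; exact hu
    have e1 : dlen cs k x u = dlen cs x k u := dlen_comm k x u
    have e2 : dlen cs k x (u * s k) = dlen cs x k (u * s k) := dlen_comm k x _
    have hasc' : dlen cs k x u < dlen cs k x (u * s k) := by omega
    obtain ⟨a, b, ha, hb, heq⟩ := d3_main hg (Ne.symm hxy) hu' hasc'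
    exact ⟨b, a, hb, ha, by rw [heq, add_comm]⟩

end geom

end BKBilliards
namespace BKBilliards

open CoxeterSystem List

set_option linter.unusedSectionVars false

variable {I : Type*} [Fintype I] [DecidableEq I]
variable {M : CoxeterMatrix I} {W : Type*} [Group W]
variable {cs : CoxeterSystem M W} {ρ : Representation ℝ W (I → ℝ)}
variable {B : LinearMap.BilinForm ℝ (I → ℝ)}

local prefix:100 "s" => cs.simple
local prefix:100 "π" => cs.wordProd
local prefix:100 "ℓ" => cs.length

lemma smul_add_nonneg {f g : I → ℝ} (hf : 0 ≤ f) (hg : 0 ≤ g) {a b : ℝ}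
    (ha : 0 ≤ a) (hb : 0 ≤ b) : 0 ≤ a • f + b • g := by
  intro k
  simp only [Pi.add_apply, Pi.smul_apply, smul_eq_mul, Pi.zero_apply]
  exact add_nonneg (mul_nonneg ha (hf k)) (mul_nonneg hb (hg k))

lemma len_le_dlen {x y : I} {u : W} (hu : u ∈ DSet cs x y) : ℓ u ≤ dlen cs x y u := by
  obtain ⟨ω, h1, h2, h3⟩ := dlen_spec hu
  have := cs.length_wordProd_le ω
  rw [h3, h2] at this
  exact this

lemma prefix_min {x y : I} {ω : List I} (hD : DWord x y ω)
    (hmin : ω.length = dlen cs x y (π ω)) {t : ℕ} (ht : t ≤ ω.length) :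
    dlen cs x y (π (ω.take t)) = t := by
  have hDt : DWord x y (ω.take t) := fun u hu => hD u (List.take_subset t ω hu)
  have hle : dlen cs x y (π (ω.take t)) ≤ t := by
    have := dlen_le hDt (rfl : π (ω.take t) = _)
    rwa [List.length_take, min_eq_left ht] at this
  rcases Nat.lt_or_ge (dlen cs x y (π (ω.take t))) t with hlt | hge
  · exfalso
    obtain ⟨ω', h1', h2', h3'⟩ := dlen_spec (⟨ω.take t, hDt, rfl⟩ : π (ω.take t) ∈ DSet cs x y)
    have hD2 : DWord x y (ω' ++ ω.drop t) := by
      intro u hu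
      rcases List.mem_append.mp hu with h | h
      · exact h1' u h
      · exact hD u (List.drop_subset t ω h)
    have hP2 : π (ω' ++ ω.drop t) = π ω := by
      rw [wordProd_append, h3', ← wordProd_append, List.take_append_drop]
    have := dlen_le hD2 hP2
    rw [List.length_append, h2', List.length_drop] at this
    omega
  · omega

section geom

variable (hg : IsGeometric cs ρ B)
include hg

/-- The key theorem on the geometric representation: if right multiplication by `s i`
increases the length of `w`, then `w α_i` is a nonnegative vector. -/
theorem ct : ∀ n : ℕ, ∀ w : W, ℓ w = n → ∀ i : I, ℓ w < ℓ (w * s i) → 0 ≤ ρ w (sroot i) := by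
  intro n
  induction n using Nat.strong_induction_on with
  | _ n IH =>
    intro w hw i hasc
    by_cases hw1 : w = 1
    · subst hw1
      rw [map_one]
      exact sroot_nonneg i
    obtain ⟨j, hj⟩ := cs.exists_rightDescent_of_ne_one hw1
    unfold CoxeterSystem.IsRightDescent at hj
    have hij : i ≠ j := by
      intro hc
      subst hc
      omega
    -- minimal length element of the coset w · ⟨s i, s j⟩
    set K := {k : ℕ | ∃ d ∈ DSet cs i j, ℓ (w * d) = k} with hK
    have hKne : K.Nonempty := ⟨ℓ w, 1, one_mem_dset i j, by rw [mul_one]⟩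
    obtain ⟨d₀, hd₀D, hd₀len⟩ := Nat.sInf_mem hKne
    obtain ⟨v, hv⟩ : ∃ v, v = w * d₀ := ⟨_, rfl⟩
    rw [← hv] at hd₀len
    have hmin : ∀ d ∈ DSet cs i j, ℓ v ≤ ℓ (w * d) := by
      intro d hd
      rw [hd₀len]
      exact Nat.sInf_le ⟨d, hd, rfl⟩
    obtain ⟨u, hudef⟩ : ∃ u, u = d₀⁻¹ := ⟨_, rfl⟩
    have hu : u ∈ DSet cs i j := hudef ▸ inv_mem_dset hd₀D
    have hwvu : w = v * u := by rw [hv, hudef, mul_assoc, mul_inv_cancel, mul_one]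
    have hsjD : s j ∈ DSet cs i j := by
      have := mul_simple_mem_dset (cs := cs) (one_mem_dset i j) (Or.inr (rfl : j = j))
      rwa [one_mul] at this
    have hsiD : s i ∈ DSet cs i j := by
      have := mul_simple_mem_dset (cs := cs) (one_mem_dset i j) (Or.inl (rfl : i = i))
      rwa [one_mul] at this
    have hvj : ℓ v ≤ ℓ (w * s j) := hmin _ hsjD
    have hvn : ℓ v < n := by omega
    have hvi : ℓ v < ℓ (v * s i) := by
      have h1 : ℓ v ≤ ℓ (v * s i) := by
        have := hmin _ (mul_simple_mem_dset hd₀D (Or.inl rfl))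
        rwa [← mul_assoc, ← hv] at this
      have h2 := cs.length_mul_simple_ne v i
      omega
    have hvj2 : ℓ v < ℓ (v * s j) := by
      have h1 : ℓ v ≤ ℓ (v * s j) := by
        have := hmin _ (mul_simple_mem_dset hd₀D (Or.inr rfl))
        rwa [← mul_assoc, ← hv] at this
      have h2 := cs.length_mul_simple_ne v j
      omega
    have hPi : 0 ≤ ρ v (sroot i) := IH (ℓ v) hvn v rfl i hvi
    have hPj : 0 ≤ ρ v (sroot j) := IH (ℓ v) hvn v rfl j hvj2
    rcases dlen_mul_simple hu (Or.inl (rfl : i = i)) with hA | hB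
    · -- ascent in the dihedral group: conclude directly
      obtain ⟨a, b, ha, hb, heq⟩ := d3' hg hij hu (Or.inl rfl) (by omega)
      rw [hwvu, rho_mul_apply, heq, map_add, map_smul, map_smul]
      exact smul_add_nonneg hPi hPj ha hb
    · -- descent at i in the dihedral group: derive a contradiction
      exfalso
      set r := dlen cs i j u with hrdef
      have hr1 : 1 ≤ r := by omega
      rcases dlen_mul_simple hu (Or.inr (rfl : j = j)) with hB2 | hB1
      · -- dihedral ascent at j : quick contradiction via (w * s j)
        obtain ⟨a, b, ha, hb, heq⟩ := d3' hg hij hu (Or.inr rfl) (by omega)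
        have hwsj : ℓ (w * s j) + 1 = n := by
          have := cs.length_mul_simple w j
          omega
        have hge : 0 ≤ ρ (w * s j) (sroot j) := by
          apply IH (ℓ (w * s j)) (by omega) _ rfl j
          rw [cs.simple_mul_simple_cancel_right]
          omega
        have hsj : ρ (s j) (sroot j) = -sroot j := rho_simple_sroot_self hg j
        have hval : ρ (w * s j) (sroot j) = -(a • ρ v (sroot i) + b • ρ v (sroot j)) := by
          rw [hwvu, mul_assoc, rho_mul_apply, rho_mul_apply, hsj,
            map_neg, map_neg, heq, map_add, map_smul, map_smul]
        have hle : ρ (w * s j) (sroot j) ≤ 0 := by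
          rw [hval]
          have := smul_add_nonneg hPi hPj ha hb
          intro k
          simp only [Pi.neg_apply, Pi.zero_apply, neg_nonpos]
          exact this k
        have hzero : ρ (w * s j) (sroot j) = 0 := le_antisymm hle hge
        exact sroot_ne_zero j (rho_eq_zero hzero)
      · -- dihedral descent at j as well: build a minimal word for u ending in j
        obtain ⟨ω₁, hω₁D, hω₁len, hω₁prod⟩ := dlen_spec (mul_simple_mem_dset hu (Or.inr rfl))
        set ωj := ω₁ ++ [j] with hωjdef
        have hωjD : DWord i j ωj := by
          intro t ht
          rcases List.mem_append.mp ht with h | h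
          · exact hω₁D t h
          · simp at h; subst h; right; rfl
        have hωjprod : π ωj = u := by
          rw [hωjdef, wordProd_append, hω₁prod, wordProd_singleton,
            cs.simple_mul_simple_cancel_right]
        have hωjlen : ωj.length = r := by
          rw [hωjdef]
          simp only [List.length_append, List.length_singleton]
          omega
        have hωjmin : ωj.length = dlen cs i j (π ωj) := by rw [hωjprod, hωjlen, hrdef]
        -- the descending chain
        have chain : ∀ q, 1 ≤ q → q ≤ r → ℓ (v * π (ωj.take (r - q))) + q = n := by
          intro q
          induction q with
          | zero => omega
          | succ q ihq =>
            intro _ hq2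
            by_cases hq0 : q = 0
            · subst hq0
              have htake : ωj.take (r - 1) = ω₁ := by
                have : r - 1 = ω₁.length := by omega
                rw [this, hωjdef, List.take_left]
              rw [htake, hω₁prod, ← mul_assoc, ← hwvu]
              have := cs.length_mul_simple w j
              omega
            · have hq1 : 1 ≤ q := by omega
              have hP := ihq hq1 (by omega)
              set t := r - (q + 1) with htdef
              have htlt : t < ωj.length := by rw [hωjlen]; omega
              set c := ωj[t] with hcdef
              have hcij : c = i ∨ c = j := hωjD c (List.getElem_mem htlt)
              have hsplit : ωj.take (t+1) = ωj.take t ++ [c] := by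
                rw [List.take_succ, List.getElem?_eq_getElem htlt]
                rfl
              have htq : r - q = t + 1 := by omega
              rw [htq] at hP
              have hxq : v * π (ωj.take (t+1)) = (v * π (ωj.take t)) * s c := by
                rw [hsplit, wordProd_append, wordProd_singleton, mul_assoc]
              -- we must show ℓ (v * π (ωj.take t)) + (q+1) = n, knowing ℓ (x_q) = n - q
              have hdichot := cs.length_mul_simple (v * π (ωj.take t)) c
              rw [← hxq] at hdichot
              rcases hdichot with hgood | hbad
              · omega
              · exfalso
                -- bad case: the chain would ascend
                have hlev : ℓ (v * π (ωj.take (t+1))) = n - q := by omega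
                have hca : ℓ (v * π (ωj.take (t+1))) <
                    ℓ ((v * π (ωj.take (t+1))) * s c) := by
                  have hcc : (v * π (ωj.take (t+1))) * s c = v * π (ωj.take t) := by
                    rw [hxq, cs.simple_mul_simple_cancel_right]
                  rw [hcc]
                  omega
                have hge : 0 ≤ ρ (v * π (ωj.take (t+1))) (sroot c) :=
                  IH (n - q) (by omega) _ hlev c hca
                -- rank-2 computation of the same vector
                have hpre : π (ωj.take t) ∈ DSet cs i j :=
                  ⟨ωj.take t, fun z hz => hωjD z (List.take_subset t ωj hz), rfl⟩
                have hd1 : dlen cs i j (π (ωj.take t)) = t :=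
                  prefix_min hωjD hωjmin (by omega)
                have hd2 : dlen cs i j (π (ωj.take t) * s c) = t + 1 := by
                  have : π (ωj.take t) * s c = π (ωj.take (t+1)) := by
                    rw [hsplit, wordProd_append, wordProd_singleton]
                  rw [this]
                  exact prefix_min hωjD hωjmin (by omega)
                obtain ⟨a, b, ha, hb, heq⟩ := d3' hg hij hpre hcij (by omega)
                have hval : ρ (v * π (ωj.take (t+1))) (sroot c)
                    = -(a • ρ v (sroot i) + b • ρ v (sroot j)) := by
                  have hsc : ρ (s c) (sroot c) = -sroot c := rho_simple_sroot_self hg c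
                  rw [hsplit, wordProd_append, wordProd_singleton, ← mul_assoc]
                  rw [rho_mul_apply, hsc, map_neg, rho_mul_apply, heq,
                    map_add, map_smul, map_smul]
                have hle : ρ (v * π (ωj.take (t+1))) (sroot c) ≤ 0 := by
                  rw [hval]
                  have := smul_add_nonneg hPi hPj ha hb
                  intro k
                  simp only [Pi.neg_apply, Pi.zero_apply, neg_nonpos]
                  exact this k
                have hzero : ρ (v * π (ωj.take (t+1))) (sroot c) = 0 := le_antisymm hle hge
                exact sroot_ne_zero c (rho_eq_zero hzero)
        -- conclusion of the chain: ℓ v + r = n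
        have hchainend := chain r hr1 (le_refl r)
        rw [Nat.sub_self] at hchainend
        simp only [List.take_zero, wordProd_nil, mul_one] at hchainend
        -- final contradiction
        have hlusi : ℓ (u * s i) ≤ r - 1 := by
          have h1 := len_le_dlen (mul_simple_mem_dset hu (Or.inl (rfl : i = i)))
          omega
        have hwsi : ℓ (w * s i) ≤ ℓ v + ℓ (u * s i) := by
          rw [hwvu, mul_assoc]
          exact cs.length_mul_le v (u * s i)
        omega

end geom

end BKBilliards
namespace BKBilliards

open CoxeterSystem List

set_option linter.unusedSectionVars false

variable {I : Type*} [Fintype I] [DecidableEq I]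
variable {M : CoxeterMatrix I} {W : Type*} [Group W]
variable {cs : CoxeterSystem M W} {ρ : Representation ℝ W (I → ℝ)}
variable {B : LinearMap.BilinForm ℝ (I → ℝ)}

local prefix:100 "s" => cs.simple
local prefix:100 "π" => cs.wordProd
local prefix:100 "ℓ" => cs.length

lemma simple_comm {i t : I} (hM : M i t = 2) : s i * s t = s t * s i := by
  have h2 : (s i * s t) * (s i * s t) = 1 := by
    have := cs.simple_mul_simple_pow i t
    rw [hM, pow_two] at this
    exact this
  have h3 : (s i * s t)⁻¹ = s i * s t := inv_eq_of_mul_eq_one_right h2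
  rw [mul_inv_rev, cs.inv_simple, cs.inv_simple] at h3
  exact h3.symm

lemma simple_comm_word {i : I} {a : List I} (h : ∀ t ∈ a, M i t = 2) :
    s i * π a = π a * s i := by
  induction a with
  | nil => simp
  | cons t a ih =>
    rw [wordProd_cons, ← mul_assoc, simple_comm (h t mem_cons_self), mul_assoc,
      ih (fun z hz => h z (mem_cons_of_mem t hz)), mul_assoc]

section geom

variable (hg : IsGeometric cs ρ B)
include hg

theorem ct' {w : W} {i : I} (h : ℓ w < ℓ (w * s i)) : 0 ≤ ρ w (sroot i) :=
  ct hg (ℓ w) w rfl i h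

theorem ct_b {w : W} {i : I} (h : ℓ (w * s i) < ℓ w) : ρ w (sroot i) ≤ 0 := by
  have h2 : ℓ (w * s i) < ℓ ((w * s i) * s i) := by
    rw [cs.simple_mul_simple_cancel_right]
    exact h
  have h3 := ct' hg h2
  have hval : ρ (w * s i) (sroot i) = -(ρ w (sroot i)) := by
    rw [rho_mul_apply, rho_simple_sroot_self hg i, map_neg]
  rw [hval] at h3
  exact neg_nonneg.mp h3

theorem root_dichotomy (w : W) (i : I) : 0 ≤ ρ w (sroot i) ∨ ρ w (sroot i) ≤ 0 := by
  rcases Nat.lt_or_gt_of_ne (cs.length_mul_simple_ne w i) with h | h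
  · right; exact ct_b hg h
  · left; exact ct' hg h

/-! ### Toggle commutation -/

lemma toggle_comm (L : Set W) {i t : I} (hM : M i t = 2) (hit : i ≠ t) (u : W) :
    toggle ρ cs L i (toggle ρ cs L t u) = toggle ρ cs L t (toggle ρ cs L i u) := by
  have htfix : ρ (s t) (sroot i) = sroot i := by
    rw [hg.simple_apply, bform_eq_zero_of_two hg hM]
    simp
  have hifix : ρ (s i) (sroot t) = sroot t := by
    rw [hg.simple_apply, bform_eq_zero_of_two hg (by rw [M.symmetric]; exact hM)]
    simp
  have hcomm := simple_comm (cs := cs) hM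
  have hinv_i : ∀ x : W, ρ (s t * x)⁻¹ (sroot i) = ρ x⁻¹ (sroot i) := by
    intro x
    rw [mul_inv_rev, cs.inv_simple, rho_mul_apply, htfix]
  have hinv_t : ∀ x : W, ρ (s i * x)⁻¹ (sroot t) = ρ x⁻¹ (sroot t) := by
    intro x
    rw [mul_inv_rev, cs.inv_simple, rho_mul_apply, hifix]
  by_cases hci : ρ u⁻¹ (sroot i) ∈ RL ρ L <;> by_cases hct : ρ u⁻¹ (sroot t) ∈ RL ρ L
  · have e1 : toggle ρ cs L t u = u := by rw [toggle, if_pos hct]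
    have e2 : toggle ρ cs L i u = u := by rw [toggle, if_pos hci]
    rw [e1, e2, e1]
  · have e1 : toggle ρ cs L t u = s t * u := by rw [toggle, if_neg hct]
    have e2 : toggle ρ cs L i u = u := by rw [toggle, if_pos hci]
    rw [e1, e2, e1]
    rw [toggle, if_pos (show ρ (s t * u)⁻¹ (sroot i) ∈ RL ρ L by rw [hinv_i]; exact hci)]
  · have e1 : toggle ρ cs L t u = u := by rw [toggle, if_pos hct]
    have e2 : toggle ρ cs L i u = s i * u := by rw [toggle, if_neg hci]
    rw [e1, e2]
    rw [toggle, if_pos (show ρ (s i * u)⁻¹ (sroot t) ∈ RL ρ L by rw [hinv_t]; exact hct)]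
  · have e1 : toggle ρ cs L t u = s t * u := by rw [toggle, if_neg hct]
    have e2 : toggle ρ cs L i u = s i * u := by rw [toggle, if_neg hci]
    rw [e1, e2]
    rw [toggle, if_neg (show ¬ ρ (s t * u)⁻¹ (sroot i) ∈ RL ρ L by rw [hinv_i]; exact hci)]
    rw [toggle, if_neg (show ¬ ρ (s i * u)⁻¹ (sroot t) ∈ RL ρ L by rw [hinv_t]; exact hct)]
    rw [← mul_assoc, ← mul_assoc, hcomm]

omit hg

lemma toggleWord_append (L : Set W) (l1 l2 : List I) (u : W) :
    toggleWord ρ cs L (l1 ++ l2) u = toggleWord ρ cs L l1 (toggleWord ρ cs L l2 u) := by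
  simp [toggleWord, List.foldr_append]

lemma toggleWord_cons (L : Set W) (i : I) (l : List I) (u : W) :
    toggleWord ρ cs L (i :: l) u = toggle ρ cs L i (toggleWord ρ cs L l u) := rfl

include hg

lemma toggle_comm_word (L : Set W) {i : I} {a : List I} (h : ∀ t ∈ a, M i t = 2 ∧ i ≠ t) (u : W) :
    toggleWord ρ cs L a (toggle ρ cs L i u) = toggle ρ cs L i (toggleWord ρ cs L a u) := by
  induction a with
  | nil => rfl
  | cons t a ih =>
    rw [toggleWord_cons, toggleWord_cons, ih (fun z hz => h z (mem_cons_of_mem t hz)),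
      toggle_comm hg L (h t mem_cons_self).1 (h t mem_cons_self).2]

/-- The "star" lemma: if a nodup word starting with `i` and another word with `i` preceded
by `a` have the same product, then every letter of `a` braid-commutes with `i`. -/
lemma star {i : I} {t1 a b : List I} (hnd1 : (i :: t1).Nodup) (hnd2 : (a ++ i :: b).Nodup)
    (hprod : π (i :: t1) = π (a ++ i :: b)) {t : I} (hta : t ∈ a) : M i t = 2 := by
  by_contra hM
  have hit1 : i ∉ t1 := (List.nodup_cons.mp hnd1).1
  have hdisj := List.disjoint_of_nodup_append hnd2
  have hia : i ∉ a := fun hc => hdisj hc mem_cons_self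
  have hndia : (i :: b).Nodup := (List.nodup_append'.mp hnd2).2.1
  have hnda : a.Nodup := (List.nodup_append'.mp hnd2).1
  have hib : i ∉ b := (List.nodup_cons.mp hndia).1
  -- the vector computed from the left-hand word is ≤ 0
  set y := ρ ((π (a ++ i :: b))⁻¹) (sroot i) with hy
  have hyneg : y ≤ 0 := by
    have hgrp : (π (a ++ i :: b))⁻¹ = π (reverse t1) * s i := by
      rw [← hprod, wordProd_cons, mul_inv_rev, cs.inv_simple, wordProd_reverse]
    have hval : y = -(ρ (π (reverse t1)) (sroot i)) := by
      rw [hy, hgrp, rho_mul_apply, rho_simple_sroot_self hg i, map_neg]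
    have hpos : 0 ≤ ρ (π (reverse t1)) (sroot i) := by
      apply wordProd_nonneg hg (by rw [List.nodup_reverse]; exact (List.nodup_cons.mp hnd1).2)
        (sroot_nonneg i)
      intro z hz
      apply sroot_apply_ne
      intro hc
      subst hc
      exact hit1 (List.mem_reverse.mp hz)
    intro k
    rw [hval]
    simp only [Pi.neg_apply, Pi.zero_apply, neg_nonpos]
    exact hpos k
  -- but the right-hand word computation makes some coordinate positive
  obtain ⟨hγpos, hγi, hγout, hγnbr⟩ := star1 hg i (reverse a)
    (by rw [List.nodup_reverse]; exact hnda) (fun hc => hia (List.mem_reverse.mp hc))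
  obtain ⟨t', ht'mem, ht'i, ht'pos⟩ := hγnbr t (List.mem_reverse.mpr hta) hM
  have ht'a : t' ∈ a := List.mem_reverse.mp ht'mem
  have ht'b : t' ∉ b := fun hc => hdisj ht'a (mem_cons_of_mem i hc)
  set γ := ρ (π (reverse a)) (sroot i) with hγ
  have hsiγ : (ρ (s i) γ) t' = γ t' := simple_coord_ne hg ht'i γ
  have hgrp2 : (π (a ++ i :: b))⁻¹ = π (reverse b) * (s i * π (reverse a)) := by
    rw [wordProd_append, wordProd_cons, mul_inv_rev, mul_inv_rev, cs.inv_simple,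
      wordProd_reverse, wordProd_reverse, mul_assoc]
  have hyval : y t' = (ρ (s i) γ) t' := by
    rw [hy, hgrp2, rho_mul_apply, rho_mul_apply]
    rw [wordProd_coord hg (fun hc => ht'b (List.mem_reverse.mp hc))]
  have : (0:ℝ) < y t' := by rw [hyval, hsiγ]; exact ht'pos
  have := hyneg t'
  simp only [Pi.zero_apply] at this
  linarith

/-- Toggle words only depend on the product, for duplicate-free words. -/
theorem toggleWord_perm_eq (L : Set W) :
    ∀ (l1 l2 : List I), l1.Nodup → l1.Perm l2 → π l1 = π l2 → ∀ u,
      toggleWord ρ cs L l1 u = toggleWord ρ cs L l2 u := by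
  intro l1
  induction l1 with
  | nil =>
    intro l2 _ hperm _ u
    rw [(hperm.symm.eq_nil : l2 = [])]
  | cons i t1 ih =>
    intro l2 hnd hperm hprod u
    have hi2 : i ∈ l2 := hperm.mem_iff.mp mem_cons_self
    obtain ⟨a, b, rfl⟩ := List.append_of_mem hi2
    have hnd2 : (a ++ i :: b).Nodup := hperm.nodup hnd
    have hM2 : ∀ t ∈ a, M i t = 2 := fun t ht => star hg hnd hnd2 hprod ht
    have hia : i ∉ a := fun hc =>
      (List.disjoint_of_nodup_append hnd2) hc mem_cons_self
    have hMit : ∀ t ∈ a, M i t = 2 ∧ i ≠ t :=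
      fun t ht => ⟨hM2 t ht, fun hc => hia (hc ▸ ht)⟩
    -- group identity
    have hgrp : π (a ++ i :: b) = s i * π (a ++ b) := by
      rw [wordProd_append, wordProd_cons, wordProd_append, ← mul_assoc,
        ← simple_comm_word (cs := cs) hM2, mul_assoc]
    have hperm2 : t1.Perm (a ++ b) := by
      have h1 : (i :: t1).Perm (i :: (a ++ b)) := hperm.trans List.perm_middle
      exact h1.cons_inv
    have hprod2 : π t1 = π (a ++ b) := by
      have h1 : s i * π t1 = s i * π (a ++ b) := by
        rw [← wordProd_cons, hprod, hgrp]
      exact mul_left_cancel h1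
    have hnd1' : t1.Nodup := (List.nodup_cons.mp hnd).2
    have ihapp := ih (a ++ b) hnd1' hperm2 hprod2 u
    rw [toggleWord_cons, ihapp]
    rw [toggleWord_append, toggleWord_append, toggleWord_cons]
    exact (toggle_comm_word hg L hMit _).symm

/-! ### Reduced words for Coxeter elements -/

lemma reduced_word_nodup_complete {l0 l : List I} (hnd0 : l0.Nodup) (hall0 : ∀ i, i ∈ l0)
    (hred : cs.IsReduced l) (heq : π l = π l0) : l.Nodup ∧ (∀ i, i ∈ l) := by
  have hall : ∀ i, i ∈ l := fun i => mem_of_wordProd_eq hg hnd0 heq.symm (hall0 i)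
  have hlen0 : l0.length = Fintype.card I := by
    apply le_antisymm (List.Nodup.length_le_card hnd0)
    have huniv : l0.toFinset = Finset.univ := by
      ext z
      simp [hall0 z]
    calc Fintype.card I = l0.toFinset.card := by rw [huniv]; simp
      _ ≤ l0.length := l0.toFinset_card_le
  have hlenle : l.length ≤ Fintype.card I := by
    have h1 : ℓ (π l0) ≤ l0.length := cs.length_wordProd_le l0
    have h2 : ℓ (π l) = l.length := hred
    rw [heq] at h2
    omega
  have huniv : l.toFinset = Finset.univ := by
    ext z
    simp [hall z]
  have hcardle : Fintype.card I ≤ l.length := by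
    calc Fintype.card I = l.toFinset.card := by rw [huniv]; simp
      _ ≤ l.length := l.toFinset_card_le
  have hdedup : l.dedup.length = l.length := by
    have h1 : l.toFinset.card = l.dedup.length := List.card_toFinset l
    have h2 : l.toFinset.card = Fintype.card I := by rw [huniv]; simp
    have h3 : l.dedup.length ≤ l.length := (List.dedup_sublist l).length_le
    omega
  have : l.dedup = l := (List.dedup_sublist l).eq_of_length hdedup
  exact ⟨this ▸ List.nodup_dedup l, hall⟩

end geom

end BKBilliards
namespace BKBilliards

open CoxeterSystem List

set_option linter.unusedSectionVars false

variable {I : Type*} [Fintype I] [DecidableEq I]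

/-- Extension by zero of a vector indexed by `J` to a vector indexed by `I`. -/
noncomputable def Emap (J : Finset I) : ({i // i ∈ J} → ℝ) →ₗ[ℝ] (I → ℝ) where
  toFun x := fun i => if h : i ∈ J then x ⟨i, h⟩ else 0
  map_add' x y := by
    funext i
    by_cases h : i ∈ J <;> simp [h]
  map_smul' c x := by
    funext i
    by_cases h : i ∈ J <;> simp [h]

lemma Emap_apply_mem {J : Finset I} (x : {i // i ∈ J} → ℝ) (j : {i // i ∈ J}) :
    Emap J x (j : I) = x j := by
  simp [Emap]

lemma Emap_apply_not_mem {J : Finset I} (x : {i // i ∈ J} → ℝ) {i : I} (h : i ∉ J) :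
    Emap J x i = 0 := by
  simp [Emap, h]

lemma Emap_sroot {J : Finset I} (j : {i // i ∈ J}) :
    Emap J (sroot j) = sroot (j : I) := by
  funext i
  by_cases h : i ∈ J
  · simp only [Emap, LinearMap.coe_mk, AddHom.coe_mk, dif_pos h]
    by_cases hij : i = (j : I)
    · have hj : (⟨i, h⟩ : {i // i ∈ J}) = j := Subtype.ext hij
      rw [hj, hij]
      simp [sroot]
    · rw [sroot_apply_ne hij, sroot_apply_ne (fun hc => hij (congrArg Subtype.val hc))]
  · rw [Emap_apply_not_mem _ h, sroot_apply_ne (fun hc => h (by rw [hc]; exact j.2))]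

lemma Emap_nonneg_iff {J : Finset I} (x : {i // i ∈ J} → ℝ) :
    0 ≤ Emap J x ↔ 0 ≤ x := by
  constructor
  · intro h j
    have := h (j : I)
    rwa [Emap_apply_mem] at this
  · intro h i
    by_cases hi : i ∈ J
    · have : Emap J x i = x ⟨i, hi⟩ := by simp [Emap, hi]
      rw [this]
      exact h ⟨i, hi⟩
    · rw [Emap_apply_not_mem _ hi]
      simp

variable {M : CoxeterMatrix I} {W : Type*} [Group W]
variable {cs : CoxeterSystem M W} {ρ : Representation ℝ W (I → ℝ)}
variable {B : LinearMap.BilinForm ℝ (I → ℝ)}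
variable {J : Finset I} {W' : Type*} [Group W']
variable {cs' : CoxeterSystem (restrictMatrix M J) W'}
variable {ρ' : Representation ℝ W' ({i // i ∈ J} → ℝ)}
variable {B' : LinearMap.BilinForm ℝ ({i // i ∈ J} → ℝ)}

section transfer

variable (hg : IsGeometric cs ρ B) (hg' : IsGeometric cs' ρ' B')
variable (φ : W' →* W) (hφ : ∀ j : {i // i ∈ J}, φ (cs'.simple j) = cs.simple (j : I))

include hg hg'

lemma bform_restrict (j j' : {i // i ∈ J}) :
    B' (sroot j) (sroot j') = B (sroot (j : I)) (sroot (j' : I)) := by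
  have hM : restrictMatrix M J j j' = M (j : I) (j' : I) := rfl
  by_cases h0 : M (j : I) (j' : I) = 0
  · rw [hg'.form_apply_of_eq_zero j j' (by rw [hM]; exact h0), hg.form_apply_of_eq_zero _ _ h0]
  · rw [hg'.form_apply_of_ne_zero j j' (by rw [hM]; exact h0), hg.form_apply_of_ne_zero _ _ h0,
      hM]

lemma bform_Emap (x : {i // i ∈ J} → ℝ) (j : {i // i ∈ J}) :
    B (Emap J x) (sroot (j : I)) = B' x (sroot j) := by
  rw [bform_expand (Emap J x), bform_expand x]
  rw [← Finset.sum_subset (Finset.subset_univ J) (f := fun t =>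
      Emap J x t * B (sroot t) (sroot (j : I)))]
  · rw [Finset.sum_subtype J (fun t => Iff.rfl) (fun t =>
      Emap J x t * B (sroot t) (sroot (j : I)))]
    apply Finset.sum_congr rfl
    intro t _
    rw [Emap_apply_mem, bform_restrict hg hg']
  · intro t _ ht
    rw [Emap_apply_not_mem _ ht, zero_mul]

include hφ

lemma Emap_equivariant (u : W') :
    ∀ x : {i // i ∈ J} → ℝ, ρ (φ u) (Emap J x) = Emap J (ρ' u x) := by
  induction u using cs'.simple_induction with
  | simple j =>
    intro x
    rw [hφ j, hg.simple_apply, hg'.simple_apply, map_sub, map_smul, Emap_sroot,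
      bform_Emap hg hg']
  | one => intro x; simp
  | mul u v hu hv =>
    intro x
    rw [map_mul, map_mul, Module.End.mul_apply, hv, hu, map_mul, Module.End.mul_apply]

lemma coord_preserved {i : I} (hi : i ∉ J) (u : W') (x : I → ℝ) :
    (ρ (φ u) x) i = x i := by
  induction u using cs'.simple_induction generalizing x with
  | simple j =>
    rw [hφ j]
    exact simple_coord_ne hg (fun hc => hi (by rw [hc]; exact j.2)) x
  | one => simp
  | mul u v hu hv =>
    rw [map_mul, rho_mul_apply, hu, hv]

/-- Positivity on the parabolic subgroup: for `i ∉ J`, every element of the image of `φ`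
keeps `α_i` nonnegative. -/
lemma parabolic_pos {i : I} (hi : i ∉ J) (u : W') : 0 ≤ ρ (φ u) (sroot i) := by
  rcases root_dichotomy hg (φ u) i with h | h
  · exact h
  · exfalso
    have h1 : (ρ (φ u) (sroot i)) i = 1 := by
      rw [coord_preserved hg hg' φ hφ hi]
      simp
    have h2 := h i
    rw [h1] at h2
    norm_num at h2

end transfer

/-- The subword of `l` consisting of letters in `J`, as a list over the subtype. -/
def listToSub (J : Finset I) (l : List I) : List {i // i ∈ J} :=
  l.filterMap (fun k => if h : k ∈ J then some ⟨k, h⟩ else none)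

@[simp] lemma listToSub_nil (J : Finset I) : listToSub J ([] : List I) = [] := rfl

lemma listToSub_cons_mem (J : Finset I) {k : I} (h : k ∈ J) (l : List I) :
    listToSub J (k :: l) = ⟨k, h⟩ :: listToSub J l := by
  simp [listToSub, List.filterMap_cons, h]

lemma listToSub_cons_not_mem (J : Finset I) {k : I} (h : k ∉ J) (l : List I) :
    listToSub J (k :: l) = listToSub J l := by
  simp [listToSub, List.filterMap_cons, h]

lemma listToSub_eq {J : Finset I} : ∀ (l : List I) (l' : List {i // i ∈ J}),
    (l'.map Subtype.val).Sublist l → l.Nodup →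
    (∀ j : {i // i ∈ J}, (j : I) ∈ l → j ∈ l') → listToSub J l = l' := by
  intro l
  induction l with
  | nil =>
    intro l' hsub _ _
    have : l'.map Subtype.val = [] := List.sublist_nil.mp hsub
    rw [List.map_eq_nil_iff] at this
    rw [this]
    rfl
  | cons k lt ih =>
    intro l' hsub hnd hcompl
    have hknd : k ∉ lt := (List.nodup_cons.mp hnd).1
    have hndt : lt.Nodup := (List.nodup_cons.mp hnd).2
    by_cases hkJ : k ∈ J
    · -- k is a J-letter: it must be matched by the head of l'
      have hjmem : (⟨k, hkJ⟩ : {i // i ∈ J}) ∈ l' := hcompl ⟨k, hkJ⟩ (by simp)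
      match l' with
      | [] => exact absurd hjmem (by simp)
      | (j₀ :: l't) =>
        have hj₀ : (j₀ : I) = k := by
          by_contra hne
          have hsub2 : ((j₀ : I) :: l't.map Subtype.val).Sublist (k :: lt) := hsub
          rcases List.sublist_cons_iff.mp hsub2 with h | ⟨r, hr, _⟩
          · have : k ∈ (j₀ : I) :: l't.map Subtype.val := by
              simp only [List.mem_cons, List.mem_map]
              right
              rcases List.mem_cons.mp hjmem with h1 | h1
              · exact absurd (congrArg Subtype.val h1).symm hne
              · exact ⟨_, h1, rfl⟩
            exact hknd (h.subset this)
          · exact hne (by rw [List.cons.injEq] at hr; exact hr.1)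
        have hsub3 : (l't.map Subtype.val).Sublist lt := by
          have hsub2 : ((j₀ : I) :: l't.map Subtype.val).Sublist (k :: lt) := hsub
          rw [hj₀] at hsub2
          rcases List.sublist_cons_iff.mp hsub2 with h | ⟨r, hr, hrs⟩
          · exfalso
            exact hknd (h.subset (by simp))
          · rw [List.cons.injEq] at hr
            rw [← hr.2] at hrs
            exact hrs
        rw [listToSub_cons_mem J hkJ]
        congr 1
        · exact Subtype.ext hj₀.symm
        · apply ih l't hsub3 hndt
          intro j hj
          have hj' : j ∈ j₀ :: l't := hcompl j (List.mem_cons_of_mem k hj)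
          rcases List.mem_cons.mp hj' with h | h
          · exfalso
            rw [h] at hj
            rw [hj₀] at hj
            exact hknd hj
          · exact h
    · have hsub' : (l'.map Subtype.val).Sublist lt := by
        rcases List.sublist_cons_iff.mp hsub with h | ⟨r, hr, _⟩
        · exact h
        · exfalso
          apply hkJ
          have : k ∈ l'.map Subtype.val := by rw [hr]; simp
          simp only [List.mem_map] at this
          obtain ⟨j, _, hj⟩ := this
          rw [← hj]
          exact j.2
      rw [listToSub_cons_not_mem J hkJ]
      apply ih l' hsub' hndt
      intro j hj
      exact hcompl j (List.mem_cons_of_mem k hj)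

end BKBilliards
namespace BKBilliards

open CoxeterSystem List

set_option linter.unusedSectionVars false

variable {I : Type*} [Fintype I] [DecidableEq I]
variable {M : CoxeterMatrix I} {W : Type*} [Group W]
variable {cs : CoxeterSystem M W} {ρ : Representation ℝ W (I → ℝ)}
variable {B : LinearMap.BilinForm ℝ (I → ℝ)}

/-- The convex closure of a set. -/
def closL (ρ : Representation ℝ W (I → ℝ)) (S : Set W) : Set W :=
  {w | ∀ β ∈ RL ρ S, w ∈ Hplus ρ β}

lemma subset_closL (S : Set W) : S ⊆ closL ρ S :=
  fun w hw β hβ => hβ.2 w hw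

lemma RL_closL (S : Set W) : RL ρ (closL ρ S) = RL ρ S := by
  ext β
  constructor
  · rintro ⟨h1, h2⟩
    exact ⟨h1, fun w hw => h2 w (subset_closL S hw)⟩
  · rintro ⟨h1, h2⟩
    exact ⟨h1, fun w hw => hw β ⟨h1, h2⟩⟩

lemma isConvex_closL (S : Set W) : IsConvex ρ (closL ρ S) := by
  intro u hu β hβ
  exact hu β (by rw [RL_closL]; exact hβ)

variable {J : Finset I} {W' : Type*} [Group W']
variable {cs' : CoxeterSystem (restrictMatrix M J) W'}
variable {ρ' : Representation ℝ W' ({i // i ∈ J} → ℝ)}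
variable {B' : LinearMap.BilinForm ℝ ({i // i ∈ J} → ℝ)}

section main

variable (hg : IsGeometric cs ρ B) (hg' : IsGeometric cs' ρ' B')
variable (φ : W' →* W) (hφ : ∀ j : {i // i ∈ J}, φ (cs'.simple j) = cs.simple (j : I))
variable (L' : Set W')

include hg hg' hφ

lemma rho_phi_mul (w' x : W') (v : I → ℝ) :
    ρ (φ w') (ρ (φ x) v) = ρ (φ (w' * x)) v := by
  rw [map_mul, map_mul, Module.End.mul_apply]

lemma toggle_out {i : I} (hi : i ∉ J) (x : W') :
    toggle ρ cs (closL ρ (φ '' L')) i (φ x) = φ x := by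
  rw [toggle, if_pos]
  rw [RL_closL]
  constructor
  · exact ⟨(φ x)⁻¹, i, rfl⟩
  · rintro w ⟨w', hw', rfl⟩
    show 0 ≤ ρ (φ w') (ρ ((φ x)⁻¹) (sroot i))
    rw [← map_inv, rho_phi_mul hg hg' φ hφ]
    exact parabolic_pos hg hg' φ hφ hi _

lemma toggle_in (j : {i // i ∈ J}) (x : W') :
    toggle ρ cs (closL ρ (φ '' L')) (j : I) (φ x) = φ (toggle ρ' cs' L' j x) := by
  have hkey : ρ ((φ x)⁻¹) (sroot (j : I)) = Emap J (ρ' x⁻¹ (sroot j)) := by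
    rw [← map_inv, ← Emap_sroot j, Emap_equivariant hg hg' φ hφ]
  have hiff : (ρ ((φ x)⁻¹) (sroot (j : I)) ∈ RL ρ (closL ρ (φ '' L'))) ↔
      (ρ' x⁻¹ (sroot j) ∈ RL ρ' L') := by
    rw [RL_closL, hkey]
    constructor
    · rintro ⟨_, h2⟩
      refine ⟨⟨x⁻¹, j, rfl⟩, ?_⟩
      intro w' hw'
      have h3 : 0 ≤ ρ (φ w') (Emap J (ρ' x⁻¹ (sroot j))) := h2 (φ w') ⟨w', hw', rfl⟩
      show 0 ≤ ρ' w' (ρ' x⁻¹ (sroot j))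
      rw [Emap_equivariant hg hg' φ hφ] at h3
      exact (Emap_nonneg_iff _).mp h3
    · rintro ⟨_, h2⟩
      constructor
      · exact ⟨φ x⁻¹, (j : I), by rw [← Emap_sroot j, Emap_equivariant hg hg' φ hφ]⟩
      · rintro w ⟨w', hw', rfl⟩
        show 0 ≤ ρ (φ w') (Emap J (ρ' x⁻¹ (sroot j)))
        rw [Emap_equivariant hg hg' φ hφ]
        exact (Emap_nonneg_iff _).mpr (h2 w' hw')
  by_cases hc : ρ' x⁻¹ (sroot j) ∈ RL ρ' L'
  · rw [toggle, if_pos (hiff.mpr hc), toggle, if_pos hc]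
  · rw [toggle, if_neg (fun h => hc (hiff.mp h)), toggle, if_neg hc, map_mul, hφ]

lemma toggleWord_transfer : ∀ (l : List I) (x : W'),
    toggleWord ρ cs (closL ρ (φ '' L')) l (φ x)
      = φ (toggleWord ρ' cs' L' (listToSub J l) x) := by
  intro l
  induction l with
  | nil => intro x; rfl
  | cons k l ih =>
    intro x
    rw [toggleWord_cons, ih]
    by_cases hk : k ∈ J
    · rw [listToSub_cons_mem J hk, toggleWord_cons]
      exact toggle_in hg hg' φ hφ L' ⟨k, hk⟩ _
    · rw [listToSub_cons_not_mem J hk]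
      exact toggle_out hg hg' φ hφ L' hk _

end main

end BKBilliards

/-- Let `W_J` be a standard parabolic subgroup of `W` (realized as a
Coxeter system `cs'` together with an injective homomorphism `φ` sending the simple
reflections of `W_J` to the corresponding simple reflections of `W`), let `c` be a
Coxeter element of `W`, and let `c'` be a Coxeter element of `W_J` such that some reduced
word for `c` contains a reduced word for `c'` as a subword. If `c` is futuristic, then
`c'` is futuristic. -/
theorem futuristic_parabolic
    {I : Type*} [Fintype I] [DecidableEq I] {M : CoxeterMatrix I} {W : Type*} [Group W]
    (cs : CoxeterSystem M W) (ρ : Representation ℝ W (I → ℝ))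
    (B : LinearMap.BilinForm ℝ (I → ℝ)) (hgeom : IsGeometric cs ρ B)
    (J : Finset I) {W' : Type*} [Group W']
    (cs' : CoxeterSystem (restrictMatrix M J) W')
    (ρ' : Representation ℝ W' ({i // i ∈ J} → ℝ))
    (B' : LinearMap.BilinForm ℝ ({i // i ∈ J} → ℝ)) (hgeom' : IsGeometric cs' ρ' B')
    (φ : W' →* W) (hφinj : Function.Injective φ)
    (hφ : ∀ j : {i // i ∈ J}, φ (cs'.simple j) = cs.simple (j : I))
    (c : W) (hc : ∃ l : List I, l.Nodup ∧ (∀ i, i ∈ l) ∧ cs.wordProd l = c)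
    (c' : W')
    (hc' : ∃ l' : List {i // i ∈ J}, l'.Nodup ∧ (∀ j, j ∈ l') ∧ cs'.wordProd l' = c')
    (hsub : ∃ (l : List I) (l' : List {i // i ∈ J}),
      cs.IsReduced l ∧ cs.wordProd l = c ∧
      cs'.IsReduced l' ∧ cs'.wordProd l' = c' ∧ (l'.map Subtype.val).Sublist l)
    (hfut : Futuristic cs ρ c) :
    Futuristic cs' ρ' c' := by
  classical
  obtain ⟨l, lsub, hredl, hprodl, hredlsub, hprodlsub, hsublist⟩ := hsub
  obtain ⟨l0, hl0nd, hl0all, hl0prod⟩ := hc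
  obtain ⟨l0', hl0'nd, hl0'all, hl0'prod⟩ := hc'
  obtain ⟨hlnd, hlall⟩ := reduced_word_nodup_complete hgeom hl0nd hl0all hredl
    (by rw [hprodl, hl0prod])
  obtain ⟨hlsubnd, hlsuball⟩ := reduced_word_nodup_complete hgeom' hl0'nd hl0'all hredlsub
    (by rw [hprodlsub, hl0'prod])
  -- identify the J-subword of l with lsub
  have hlists : listToSub J l = lsub :=
    listToSub_eq l lsub hsublist hlnd (fun j _ => hlsuball j)
  intro l'' hnd'' hall'' hprod'' L' hL'ne hL'conv u' ⟨K, hK1, hKper⟩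
  -- the two toggle words on W' agree
  have hTW : toggleWord ρ' cs' L' l'' = toggleWord ρ' cs' L' lsub := by
    funext u
    apply toggleWord_perm_eq hgeom' L' l'' lsub hnd''
    · apply List.perm_of_nodup_nodup_toFinset_eq hnd'' hlsubnd
      ext z
      simp [hall'' z, hlsuball z]
    · rw [hprod'', hprodlsub]
  set LL := closL ρ (φ '' L') with hLL
  have hLLne : LL.Nonempty := by
    obtain ⟨w0, hw0⟩ := hL'ne
    exact ⟨φ w0, subset_closL _ ⟨w0, hw0, rfl⟩⟩
  have hLLconv : IsConvex ρ LL := isConvex_closL _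
  -- transfer the periodic point
  have htrans : ∀ x : W', toggleWord ρ cs LL l (φ x) = φ (toggleWord ρ' cs' L' lsub x) := by
    intro x
    rw [hLL, toggleWord_transfer hgeom hgeom' φ hφ L' l x, hlists]
  have hiter : ∀ (n : ℕ) (x : W'),
      (toggleWord ρ cs LL l)^[n] (φ x) = φ ((toggleWord ρ' cs' L' lsub)^[n] x) := by
    intro n
    induction n with
    | zero => intro x; rfl
    | succ n ihn =>
      intro x
      rw [Function.iterate_succ_apply', Function.iterate_succ_apply', ihn, htrans]
  have hper : (toggleWord ρ cs LL l)^[K] (φ u') = φ u' := by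
    rw [hiter K u', ← hTW, hKper]
  have hmem : φ u' ∈ LL := hfut l hlnd hlall hprodl LL hLLne hLLconv (φ u') ⟨K, hK1, hper⟩
  -- conclude that u' ∈ L' by convexity of L'
  apply hL'conv u'
  rintro β' ⟨⟨w'', j, hβeq⟩, hβpos⟩
  show 0 ≤ ρ' u' β'
  have hEβ : Emap J β' ∈ RL ρ (φ '' L') := by
    constructor
    · exact ⟨φ w'', (j : I), by
        rw [hβeq, ← Emap_sroot j, Emap_equivariant hgeom hgeom' φ hφ]⟩
    · rintro w ⟨w', hw', rfl⟩
      show 0 ≤ ρ (φ w') (Emap J β')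
      rw [Emap_equivariant hgeom hgeom' φ hφ]
      exact (Emap_nonneg_iff _).mpr (hβpos w' hw')
  have h1 : 0 ≤ ρ (φ u') (Emap J β') := hmem (Emap J β') hEβ
  rw [Emap_equivariant hgeom hgeom' φ hφ] at h1
  exact (Emap_nonneg_iff _).mp h1
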